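/- Let k, r ∈ ℕ, let M be a finite multiset of vectors in {0,1,□}^d with cover (R_M, T_M), and let M' ⊆ M \ R_M be nonempty such that the compatibility graph on M' with threshold 2r is connected. If there exist a completion M* of M (with witnessing bijection φ) and a set S ⊆ {0,1}^d with |S| ≤ k such that every a ∈ M* has Hamming distance at most r to some vector in S, then γ(M') ≤ 4rk − r + |T_M|. -/

import Mathlib

/-!
Every vector of `M'` is known outside `T`, so there the δ-distance of two of them equals the
Hamming distance of their completions. Each completion lies within `r` of a centre in `S`, hence
neighbours in the compatibility graph (δ ≤ 2r) have centres within `4r` of each other outside `T`.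
The centres take at most `k` values, so connectivity joins any two of them by at most `k - 1`
such hops: two vectors of `M'` are within `4r(k - 1) + 2r ≤ 4rk - r` outside `T`, and the
coordinates of `T` add at most `|T|`.
-/

open scoped Classical

/-- δ(a,b) for incomplete vectors: the number of coordinates on which
both entries are known and differ. -/
noncomputable def pdist {ι : Type} [Fintype ι] (a b : ι → Option Bool) : ℕ :=
  (Finset.univ.filter fun i => ∃ x y : Bool, a i = some x ∧ b i = some y ∧ x ≠ y).card

/-- The compatibility graph on a finite set of incomplete vectors with threshold ρ. -/
def compatGraph {ι : Type} [Fintype ι] (S : Finset (ι → Option Bool)) (ρ : ℕ) :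
    SimpleGraph {x // x ∈ S} :=
  SimpleGraph.fromRel fun a b => pdist a.1 b.1 ≤ ρ

/-- γ(S): the diameter (maximum pairwise δ) of a finite multiset of incomplete vectors. -/
noncomputable def mdiam {ι : Type} [Fintype ι] (S : Multiset (ι → Option Bool)) : ℕ :=
  (S.toFinset ×ˢ S.toFinset).sup fun p => pdist p.1 p.2

/-- `Mc` is a completion of `M`: a multiset of complete vectors in bijection with `M`,
agreeing with the corresponding vectors on all non-missing entries. -/
def IsCompletion {ι : Type} (M : Multiset (ι → Option Bool))
    (Mc : Multiset (ι → Bool)) : Prop :=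
  Multiset.Rel (fun a c => ∀ i (x : Bool), a i = some x → c i = x) M Mc

section Hamming

variable {ι : Type*} [Fintype ι] {β : ι → Type*} [∀ i, DecidableEq (β i)]

lemma hammingDist_domRestrict_le (s : Set ι) [Fintype s] (x y : ∀ i, β i) :
    hammingDist (s.domRestrict x) (s.domRestrict y) ≤ hammingDist x y :=
  Finset.card_le_card_of_injOn Subtype.val
    (fun i hi => by simpa using (Finset.mem_filter.1 hi).2) Subtype.val_injective.injOn

lemma hammingDist_le_domRestrict_compl_add_card [DecidableEq ι] (T : Finset ι) (x y : ∀ i, β i) :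
    hammingDist x y ≤
      hammingDist ((↑T : Set ι)ᶜ.domRestrict x) ((↑T : Set ι)ᶜ.domRestrict y) + T.card := by
  refine (Finset.card_le_card (t := (Finset.univ.filter fun i : ↥(↑T : Set ι)ᶜ => x i ≠ y i).map
    (Function.Embedding.subtype _) ∪ T) ?_).trans ((Finset.card_union_le _ _).trans ?_)
  · intro i hi
    by_cases hiT : i ∈ T
    · exact Finset.mem_union_right _ hiT
    · refine Finset.mem_union_left _ (Finset.mem_map.2 ⟨⟨i, hiT⟩, ?_, rfl⟩)
      simpa [hammingDist] using hi
  · rw [Finset.card_map]; rfl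

lemma hammingDist_le_of_le_of_le {x x' y y' : ∀ i, β i} {r : ℕ}
    (hx : hammingDist x x' ≤ r) (hy : hammingDist y y' ≤ r) :
    hammingDist x y ≤ hammingDist x' y' + 2 * r := by
  have := hammingDist_triangle x x' y
  have := hammingDist_triangle x' y' y
  rw [hammingDist_comm] at hy
  omega

end Hamming

section IncompleteVectors

variable {ι : Type} [Fintype ι]

lemma pdist_comm (a b : ι → Option Bool) : pdist a b = pdist b a := by
  unfold pdist
  congr 1
  ext i
  simp only [Finset.mem_filter, Finset.mem_univ, true_and]
  exact ⟨fun ⟨x, y, hx, hy, hxy⟩ => ⟨y, x, hy, hx, hxy.symm⟩,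
    fun ⟨x, y, hx, hy, hxy⟩ => ⟨y, x, hy, hx, hxy.symm⟩⟩

lemma compatGraph_adj_iff {S : Finset (ι → Option Bool)} {ρ : ℕ} {a b : {x // x ∈ S}} :
    (compatGraph S ρ).Adj a b ↔ a ≠ b ∧ pdist a.1 b.1 ≤ ρ := by
  rw [compatGraph, SimpleGraph.fromRel_adj, pdist_comm b.1, or_self]

variable {a b : ι → Option Bool} {x y : ι → Bool}

lemma pdist_le_hammingDist (ha : ∀ i c, a i = some c → x i = c)
    (hb : ∀ i c, b i = some c → y i = c) : pdist a b ≤ hammingDist x y := by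
  refine Finset.card_le_card fun i hi => ?_
  obtain ⟨c, c', hc, hc', hcc'⟩ := (Finset.mem_filter.1 hi).2
  simpa [ha i c hc, hb i c' hc'] using hcc'

lemma hammingDist_domRestrict_le_pdist {s : Set ι} [Fintype s] (has : ∀ i ∈ s, a i ≠ none)
    (hbs : ∀ i ∈ s, b i ≠ none) (ha : ∀ i c, a i = some c → x i = c)
    (hb : ∀ i c, b i = some c → y i = c) :
    hammingDist (s.domRestrict x) (s.domRestrict y) ≤ pdist a b := by
  refine Finset.card_le_card_of_injOn Subtype.val (fun i hi => ?_) Subtype.val_injective.injOn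
  obtain ⟨c, hc⟩ := Option.ne_none_iff_exists'.1 (has i i.2)
  obtain ⟨c', hc'⟩ := Option.ne_none_iff_exists'.1 (hbs i i.2)
  have hxy : x i ≠ y i := (Finset.mem_filter.1 hi).2
  rw [ha i c hc, hb i c' hc'] at hxy
  exact Finset.mem_filter.2 ⟨Finset.mem_univ _, c, c', hc, hc', hxy⟩

end IncompleteVectors

namespace SimpleGraph

variable {V ι : Type*} [Fintype ι] {β : ι → Type*} [∀ i, DecidableEq (β i)]
  {G : SimpleGraph V} {f : V → ∀ i, β i} {ρ : ℕ}

lemma Walk.hammingDist_le_mul_length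
    (hadj : ∀ a b, G.Adj a b → hammingDist (f a) (f b) ≤ ρ) {u v : V} (p : G.Walk u v) :
    hammingDist (f u) (f v) ≤ ρ * p.length := by
  induction p with
  | nil => simp
  | @cons a b c hab p ih =>
    calc hammingDist (f a) (f c) ≤ hammingDist (f a) (f b) + hammingDist (f b) (f c) :=
          hammingDist_triangle _ _ _
      _ ≤ ρ + ρ * p.length := Nat.add_le_add (hadj a b hab) ih
      _ = ρ * (cons hab p).length := by rw [Walk.length_cons]; ring

/-- Reachability passes to the graph of `ρ`-close points of `W`, where a simple path has fewer
than `W.card` edges. -/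
lemma Preconnected.hammingDist_le_mul_card_sub_one (hG : G.Preconnected)
    {W : Finset (∀ i, β i)} (hfW : ∀ v, f v ∈ W)
    (hadj : ∀ a b, G.Adj a b → hammingDist (f a) (f b) ≤ ρ) (u v : V) :
    hammingDist (f u) (f v) ≤ ρ * (W.card - 1) := by
  let H : SimpleGraph W := fromRel fun x y => hammingDist x.1 y.1 ≤ ρ
  have hHadj : ∀ x y, H.Adj x y → hammingDist x.1 y.1 ≤ ρ := fun x y hxy => by
    rcases (fromRel_adj _ _ _).1 hxy with ⟨-, h | h⟩
    · exact h
    · rwa [hammingDist_comm]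
  have hreach : H.Reachable ⟨f u, hfW u⟩ ⟨f v, hfW v⟩ := by
    rw [reachable_iff_reflTransGen]
    refine Relation.ReflTransGen.lift' (fun v => (⟨f v, hfW v⟩ : W)) (fun a b hab => ?_) _ _
      ((reachable_iff_reflTransGen _ _).1 (hG u v))
    by_cases hfab : f a = f b
    · have hgab : (⟨f a, hfW a⟩ : W) = ⟨f b, hfW b⟩ := Subtype.ext hfab
      rw [Function.onFun, hgab]
    · exact Relation.ReflTransGen.single
        ⟨fun h => hfab (congrArg Subtype.val h), Or.inl (hadj a b hab)⟩
  obtain ⟨w⟩ := hreach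
  have hlen : w.toPath.1.length < W.card := by
    simpa using w.toPath.2.length_lt
  calc hammingDist (f u) (f v) ≤ ρ * w.toPath.1.length :=
        w.toPath.1.hammingDist_le_mul_length (f := Subtype.val) hHadj
    _ ≤ ρ * (W.card - 1) := Nat.mul_le_mul_left _ (by omega)

lemma Preconnected.hammingDist_le_of_near_centres (hG : G.Preconnected) {c s : V → ∀ i, β i}
    {S : Finset (∀ i, β i)} {k r : ℕ} (hsS : ∀ v, s v ∈ S) (hSk : S.card ≤ k)
    (hsc : ∀ v, hammingDist (s v) (c v) ≤ r)
    (hadj : ∀ a b, G.Adj a b → hammingDist (c a) (c b) ≤ 2 * r) (u v : V) :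
    hammingDist (c u) (c v) ≤ 4 * r * k - 2 * r := by
  have hcs (v : V) : hammingDist (c v) (s v) ≤ r := hammingDist_comm (s v) (c v) ▸ hsc v
  have hcentres := hG.hammingDist_le_mul_card_sub_one hsS (ρ := 4 * r) (fun a b hab => by
    have := hammingDist_le_of_le_of_le (hsc a) (hsc b)
    have := hadj a b hab
    omega) u v
  obtain ⟨m, hSm⟩ : ∃ m, S.card = m + 1 :=
    Nat.exists_eq_add_of_le' (Finset.card_pos.2 ⟨_, hsS u⟩)
  have hmk : 4 * r * (m + 1) ≤ 4 * r * k := Nat.mul_le_mul_left _ (hSm ▸ hSk)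
  rw [mul_add, mul_one] at hmk
  rw [hSm, Nat.add_sub_cancel] at hcentres
  have := hammingDist_le_of_le_of_le (hcs u) (hcs v)
  omega

end SimpleGraph

theorem statement_6_general {d : ℕ} (k r : ℕ)
    (M R : Multiset (Fin d → Option Bool)) (T : Finset (Fin d))
    (hcover : ∀ v ∈ M, ∀ i : Fin d, v i = none → v ∈ R ∨ i ∈ T)
    (M' : Multiset (Fin d → Option Bool))
    (hM'M : M' ≤ M) (hM'R : ∀ v ∈ M', v ∉ R)
    (hconn : (compatGraph M'.toFinset (2 * r)).Connected)
    (hsol : ∃ Mc : Multiset (Fin d → Bool), IsCompletion M Mc ∧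
      ∃ S : Finset (Fin d → Bool), S.card ≤ k ∧
        ∀ a ∈ Mc, ∃ s ∈ S, hammingDist s a ≤ r) :
    mdiam M' ≤ 4 * r * k - r + T.card := by
  obtain ⟨Mc, hcomp, S, hSk, hS⟩ := hsol
  have hnear (a : {x // x ∈ M'.toFinset}) : ∃ c : Fin d → Bool,
      (∀ i x, a.1 i = some x → c i = x) ∧ ∃ s ∈ S, hammingDist s c ≤ r := by
    obtain ⟨c, hcMc, hac⟩ := Multiset.exists_mem_of_rel_of_mem hcomp
      (Multiset.mem_of_le hM'M (Multiset.mem_toFinset.1 a.2))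
    exact ⟨c, hac, hS c hcMc⟩
  choose c hc s hsS hsc using hnear
  set U : Set (Fin d) := (↑T)ᶜ
  have hknown (a : {x // x ∈ M'.toFinset}) : ∀ i ∈ U, a.1 i ≠ none := fun i hiU hai =>
    have ha := Multiset.mem_toFinset.1 a.2
    hiU ((hcover a.1 (Multiset.mem_of_le hM'M ha) i hai).resolve_left (hM'R _ ha))
  have hdiam := hconn.preconnected.hammingDist_le_of_near_centres
    (c := fun a => U.domRestrict (c a)) (s := fun a => U.domRestrict (s a))
    (fun a => Finset.mem_image_of_mem _ (hsS a)) (Finset.card_image_le.trans hSk)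
    (fun a => (hammingDist_domRestrict_le U _ _).trans (hsc a))
    (fun a b hab => (hammingDist_domRestrict_le_pdist (hknown a) (hknown b) (hc a) (hc b)).trans
      (compatGraph_adj_iff.1 hab).2)
  refine Finset.sup_le fun p hp => ?_
  obtain ⟨hp₁, hp₂⟩ := Finset.mem_product.1 hp
  calc pdist p.1 p.2 ≤ hammingDist (c ⟨p.1, hp₁⟩) (c ⟨p.2, hp₂⟩) :=
        pdist_le_hammingDist (hc ⟨p.1, hp₁⟩) (hc ⟨p.2, hp₂⟩)
    _ ≤ hammingDist (U.domRestrict (c ⟨p.1, hp₁⟩)) (U.domRestrict (c ⟨p.2, hp₂⟩)) + T.card :=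
        hammingDist_le_domRestrict_compl_add_card T _ _
    _ ≤ 4 * r * k - 2 * r + T.card := Nat.add_le_add_right (hdiam _ _) _
    _ ≤ 4 * r * k - r + T.card := by omega

theorem statement_6 {d : ℕ} (k r : ℕ)
    (M R : Multiset (Fin d → Option Bool)) (T : Finset (Fin d))
    (hRM : R ≤ M)
    (hcover : ∀ v ∈ M, ∀ i : Fin d, v i = none → v ∈ R ∨ i ∈ T)
    (M' : Multiset (Fin d → Option Bool))
    (hM'M : M' ≤ M) (hM'R : ∀ v ∈ M', v ∉ R) (hne : M' ≠ 0)
    (hconn : (compatGraph M'.toFinset (2 * r)).Connected)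
    (hsol : ∃ Mc : Multiset (Fin d → Bool), IsCompletion M Mc ∧
      ∃ S : Finset (Fin d → Bool), S.card ≤ k ∧
        ∀ a ∈ Mc, ∃ s ∈ S, hammingDist s a ≤ r) :
    mdiam M' ≤ 4 * r * k - r + T.card :=
  statement_6_general k r M R T hcover M' hM'M hM'R hconn hsol
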